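/- For all z, w ∈ ℂ one has |𝐅(z,w)| ≤ e^{−|z−w|²/2} + e^{−(Re(z−w))²/2}·(1/√π)·F(|Im(z−w)|/√2), where F is Dawson's function. Moreover, there is a constant C such that |z−w|·|𝐅(z,w)| ≤ C for all z, w ∈ ℂ; in particular 𝐅(z,w) → 0 as |z−w| → ∞. -/

import Mathlib

open MeasureTheory Filter

/-- The entire function `Φ(z) = 1/2 + (2π)^{−1/2} z ∫₀¹ e^{−z²t²/2} dt`, the analytic
continuation to `ℂ` of the standard normal distribution function. -/
noncomputable def PhiC (z : ℂ) : ℂ :=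
  1 / 2 + ((Real.sqrt (2 * Real.pi))⁻¹ : ℝ) * z *
    ∫ t in (0 : ℝ)..1, Complex.exp (-z ^ 2 * (t : ℂ) ^ 2 / 2)

/-- The Ginibre(∞) boundary kernel `𝐅(z,w) = e^{z w̄ − |z|²/2 − |w|²/2} Φ(−z − w̄)`. -/
noncomputable def Fkern (z w : ℂ) : ℂ :=
  Complex.exp (z * (starRingEnd ℂ) w - ((‖z‖ : ℝ) : ℂ) ^ 2 / 2 -
    ((‖w‖ : ℝ) : ℂ) ^ 2 / 2) * PhiC (-z - (starRingEnd ℂ) w)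

/-- Dawson's function `F(t) = e^{−t²} ∫₀ᵗ e^{x²} dx`. -/
noncomputable def dawson (t : ℝ) : ℝ :=
  Real.exp (-t ^ 2) * ∫ x in (0 : ℝ)..t, Real.exp (x ^ 2)

/-!
Since `|e^{z w̄ − |z|²/2 − |w|²/2}| = e^{−|z−w|²/2}`, everything reduces to bounding `Φ(u)` at
`u = −z − w̄ = x + iy`. As `Φ` is entire with `Φ' = φ := (2π)^{−1/2} e^{−ζ²/2}`,
`Φ(x + iy) = Φ(x) + iy ∫₀¹ φ(x + iry) dr`, where `|Φ(x)| ≤ 1` and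
`|φ(x + iry)| = φ(x) e^{r²y²/2}`; after multiplication by `e^{−y²/2}` the remaining integral is
`√2 F(|y|/√2)`. The uniform bound on `|z−w| |𝐅(z,w)|` then follows from `u e^{−u²/2} ≤ 1`,
`F ≤ 1` and `t F(t) ≤ 1`.
-/

open Real

lemma hasDerivAt_mul_cexp_neg_sq (a u : ℂ) :
    HasDerivAt (fun u : ℂ => u * Complex.exp (-a ^ 2 * u ^ 2 / 2))
      ((1 - a ^ 2 * u ^ 2) * Complex.exp (-a ^ 2 * u ^ 2 / 2)) u := by
  have hexp : HasDerivAt (fun u : ℂ => -a ^ 2 * u ^ 2 / 2) (-a ^ 2 * u) u :=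
    (((hasDerivAt_pow 2 u).const_mul (-a ^ 2)).div_const 2).congr_deriv (by push_cast; ring)
  exact ((hasDerivAt_id' u).mul hexp.cexp).congr_deriv (by ring)

lemma integral_one_sub_mul_cexp_neg_sq (s : ℂ) :
    ∫ t in (0 : ℝ)..1, (1 - s ^ 2 * (t : ℂ) ^ 2) * Complex.exp (-s ^ 2 * (t : ℂ) ^ 2 / 2)
      = Complex.exp (-s ^ 2 / 2) := by
  rw [intervalIntegral.integral_eq_sub_of_hasDerivAt
    (fun t _ => (hasDerivAt_mul_cexp_neg_sq s t).comp_ofReal)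
    (Continuous.intervalIntegrable (by fun_prop) _ _)]
  simp

lemma hasDerivAt_mul_integral_cexp_neg_sq (s₀ : ℂ) :
    HasDerivAt (fun s : ℂ => s * ∫ t in (0 : ℝ)..1, Complex.exp (-s ^ 2 * (t : ℂ) ^ 2 / 2))
      (Complex.exp (-s₀ ^ 2 / 2)) s₀ := by
  have hderiv (s : ℂ) (t : ℝ) :
      HasDerivAt (fun s => s * Complex.exp (-s ^ 2 * (t : ℂ) ^ 2 / 2))
        ((1 - s ^ 2 * (t : ℂ) ^ 2) * Complex.exp (-s ^ 2 * (t : ℂ) ^ 2 / 2)) s := by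
    refine ((hasDerivAt_mul_cexp_neg_sq t s).congr_of_eventuallyEq
      (Eventually.of_forall fun u => ?_)).congr_deriv ?_ <;> ring_nf
  obtain ⟨C, hC⟩ := (isCompact_closedBall s₀ 1 |>.prod isCompact_Icc).exists_bound_of_continuousOn
    (f := fun p : ℂ × ℝ =>
      (1 - p.1 ^ 2 * (p.2 : ℂ) ^ 2) * Complex.exp (-p.1 ^ 2 * (p.2 : ℂ) ^ 2 / 2))
    (Continuous.continuousOn (by fun_prop))
  have hparam := intervalIntegral.hasDerivAt_integral_of_dominated_loc_of_deriv_le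
    (bound := fun _ => C) (a := 0) (b := 1) (μ := volume) (Metric.ball_mem_nhds s₀ one_pos)
    (Eventually.of_forall fun s => (Continuous.aestronglyMeasurable (by fun_prop)))
    (Continuous.intervalIntegrable (by fun_prop) _ _)
    (Continuous.aestronglyMeasurable (by fun_prop))
    (ae_of_all _ fun t ht s hs => hC (s, t) ⟨Metric.ball_subset_closedBall hs,
      Set.Ioc_subset_Icc_self (by simpa using ht)⟩)
    intervalIntegrable_const
    (ae_of_all _ fun t _ s _ => hderiv s t)
  rw [← integral_one_sub_mul_cexp_neg_sq]
  exact hparam.2.congr_of_eventuallyEq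
    (Eventually.of_forall fun s => (intervalIntegral.integral_const_mul s _).symm)

lemma hasDerivAt_PhiC (s : ℂ) :
    HasDerivAt PhiC (((√(2 * π))⁻¹ : ℝ) * Complex.exp (-s ^ 2 / 2)) s := by
  have := ((hasDerivAt_mul_integral_cexp_neg_sq s).const_mul
    (((√(2 * π))⁻¹ : ℝ) : ℂ)).const_add (1 / 2)
  simp only [← mul_assoc] at this
  exact this

lemma PhiC_add_sub_PhiC (z v : ℂ) :
    PhiC (z + v) - PhiC z
      = v * ∫ r in (0 : ℝ)..1, ((√(2 * π))⁻¹ : ℝ) * Complex.exp (-(z + r • v) ^ 2 / 2) :=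
  (intervalIntegral.integral_unitInterval_deriv_eq_sub (f := PhiC)
    (f' := fun ζ => ((√(2 * π))⁻¹ : ℝ) * Complex.exp (-ζ ^ 2 / 2))
    (Continuous.continuousOn (by fun_prop)) fun r _ => hasDerivAt_PhiC _).symm

lemma integral_exp_neg_sq_div_two_le {a : ℝ} (ha : 0 ≤ a) :
    ∫ u in (0 : ℝ)..a, Real.exp (-u ^ 2 / 2) ≤ √(2 * π) / 2 := by
  have hint : IntegrableOn (fun u : ℝ => Real.exp (-(1 / 2) * u ^ 2)) (Set.Ioi 0) :=
    (integrable_exp_neg_mul_sq (by norm_num)).integrableOn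
  calc ∫ u in (0 : ℝ)..a, Real.exp (-u ^ 2 / 2)
      = ∫ u in Set.Ioc 0 a, Real.exp (-(1 / 2) * u ^ 2) := by
        rw [intervalIntegral.integral_of_le ha]; ring_nf
    _ ≤ ∫ u in Set.Ioi 0, Real.exp (-(1 / 2) * u ^ 2) :=
        setIntegral_mono_set hint (ae_of_all _ fun _ => (Real.exp_pos _).le)
          Set.Ioc_subset_Ioi_self.eventuallyLE
    _ = √(2 * π) / 2 := by rw [integral_gaussian_Ioi]; norm_num [div_div_eq_mul_div, mul_comm]

lemma norm_PhiC_ofReal_le_one (x : ℝ) : ‖PhiC x‖ ≤ 1 := by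
  have hint : ‖∫ t in (0 : ℝ)..1, Complex.exp (-(x : ℂ) ^ 2 * (t : ℂ) ^ 2 / 2)‖
      ≤ ∫ t in (0 : ℝ)..1, Real.exp (-(|x| * t) ^ 2 / 2) := by
    refine intervalIntegral.norm_integral_le_of_norm_le zero_le_one
      (ae_of_all _ fun t _ => le_of_eq ?_) (Continuous.intervalIntegrable (by fun_prop) _ _)
    rw [Complex.norm_exp, mul_pow, sq_abs]
    norm_cast
    ring_nf
  have hx : |x| * ∫ t in (0 : ℝ)..1, Real.exp (-(|x| * t) ^ 2 / 2) ≤ √(2 * π) / 2 := by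
    rw [intervalIntegral.mul_integral_comp_mul_left (f := fun u => Real.exp (-u ^ 2 / 2)), mul_zero,
      mul_one]
    exact integral_exp_neg_sq_div_two_le (abs_nonneg x)
  calc ‖PhiC x‖
      ≤ ‖(1 / 2 : ℂ)‖ + (√(2 * π))⁻¹ *
          (|x| * ‖∫ t in (0 : ℝ)..1, Complex.exp (-(x : ℂ) ^ 2 * (t : ℂ) ^ 2 / 2)‖) := by
        refine (norm_add_le _ _).trans_eq ?_
        rw [mul_assoc, norm_mul, norm_mul, Complex.norm_real, Complex.norm_real,
          Real.norm_of_nonneg (by positivity), Real.norm_eq_abs]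
    _ ≤ 1 / 2 + (√(2 * π))⁻¹ * (√(2 * π) / 2) := by
        gcongr
        · norm_num
        · exact (mul_le_mul_of_nonneg_left hint (abs_nonneg x)).trans hx
    _ = 1 := by field_simp; norm_num

lemma norm_cexp_neg_sq_div_two_vertical (x y r : ℝ) :
    ‖Complex.exp (-((x : ℂ) + r • ((y : ℂ) * Complex.I)) ^ 2 / 2)‖
      = Real.exp (-x ^ 2 / 2) * Real.exp ((|y| * r) ^ 2 / 2) := by
  rw [Complex.norm_exp, ← Real.exp_add, mul_pow, sq_abs]
  congr 1
  simp [sq]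
  ring

lemma norm_PhiC_le (s : ℂ) :
    ‖PhiC s‖ ≤ 1 + (√(2 * π))⁻¹ * Real.exp (-s.re ^ 2 / 2) *
      (|s.im| * ∫ r in (0 : ℝ)..1, Real.exp ((|s.im| * r) ^ 2 / 2)) := by
  have hs : s = s.re + s.im * Complex.I := (Complex.re_add_im s).symm
  have hint : ‖∫ r in (0 : ℝ)..1, ((√(2 * π))⁻¹ : ℝ) *
        Complex.exp (-((s.re : ℂ) + r • ((s.im : ℂ) * Complex.I)) ^ 2 / 2)‖
      ≤ ∫ r in (0 : ℝ)..1, (√(2 * π))⁻¹ * Real.exp (-s.re ^ 2 / 2) *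
          Real.exp ((|s.im| * r) ^ 2 / 2) := by
    refine intervalIntegral.norm_integral_le_of_norm_le zero_le_one
      (ae_of_all _ fun r _ => le_of_eq ?_) (Continuous.intervalIntegrable (by fun_prop) _ _)
    rw [norm_mul, norm_cexp_neg_sq_div_two_vertical, Complex.norm_real,
      Real.norm_of_nonneg (by positivity), mul_assoc]
  calc ‖PhiC s‖
      ≤ ‖PhiC s.re‖ + |s.im| * ‖∫ r in (0 : ℝ)..1, ((√(2 * π))⁻¹ : ℝ) *
          Complex.exp (-((s.re : ℂ) + r • ((s.im : ℂ) * Complex.I)) ^ 2 / 2)‖ := by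
        have hdiff := PhiC_add_sub_PhiC s.re (s.im * Complex.I)
        rw [← hs] at hdiff
        rw [← sub_add_cancel (PhiC s) (PhiC s.re), hdiff, add_comm]
        refine (norm_add_le _ _).trans_eq ?_
        simp
    _ ≤ 1 + |s.im| * ∫ r in (0 : ℝ)..1, (√(2 * π))⁻¹ * Real.exp (-s.re ^ 2 / 2) *
          Real.exp ((|s.im| * r) ^ 2 / 2) := by
        gcongr
        exact norm_PhiC_ofReal_le_one _
    _ = _ := by rw [intervalIntegral.integral_const_mul]; ring

lemma norm_Fkern (z w : ℂ) :
    ‖Fkern z w‖ = Real.exp (-‖z - w‖ ^ 2 / 2) * ‖PhiC (-z - (starRingEnd ℂ) w)‖ := by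
  rw [Fkern, norm_mul, Complex.norm_exp]
  congr 2
  simp only [← Complex.ofReal_pow, Complex.sq_norm, Complex.normSq_apply, Complex.sub_re,
    Complex.mul_re, Complex.conj_re, Complex.conj_im, Complex.div_ofNat_re, Complex.ofReal_re,
    Complex.sub_im]
  ring

lemma dawson_eq_mul_integral (t : ℝ) :
    dawson t = Real.exp (-t ^ 2) * (t * ∫ r in (0 : ℝ)..1, Real.exp ((t * r) ^ 2)) := by
  rw [intervalIntegral.mul_integral_comp_mul_left (f := fun x => Real.exp (x ^ 2)), mul_zero,
    mul_one, dawson]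

lemma sqrt_two_mul_dawson (y : ℝ) :
    √2 * dawson (|y| / √2)
      = Real.exp (-y ^ 2 / 2) * (|y| * ∫ r in (0 : ℝ)..1, Real.exp ((|y| * r) ^ 2 / 2)) := by
  have h2 : √2 ^ 2 = 2 := Real.sq_sqrt zero_le_two
  have hsq (r : ℝ) : (|y| / √2 * r) ^ 2 = (|y| * r) ^ 2 / 2 := by
    rw [div_mul_eq_mul_div, div_pow, h2]
  simp only [dawson_eq_mul_integral, hsq, div_pow, h2, sq_abs]
  field_simp

lemma norm_Fkern_le (z w : ℂ) :
    ‖Fkern z w‖ ≤ Real.exp (-‖z - w‖ ^ 2 / 2) +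
      Real.exp (-(z - w).re ^ 2 / 2) * (√π)⁻¹ * dawson (|(z - w).im| / √2) := by
  have hD : Real.exp (-‖z - w‖ ^ 2 / 2)
      = Real.exp (-(z - w).re ^ 2 / 2) * Real.exp (-(z - w).im ^ 2 / 2) := by
    rw [← Real.exp_add, Complex.sq_norm, Complex.normSq_apply]; ring_nf
  set u := -z - (starRingEnd ℂ) w
  set a := (z - w).re
  set b := (z - w).im
  have hu : |u.im| = |b| := by
    rw [← abs_neg]; congr 1; simp [u, b]; ring
  have hc : (√(2 * π))⁻¹ * √2 = (√π)⁻¹ := by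
    rw [Real.sqrt_mul zero_le_two]; field_simp
  have hre : Real.exp (-u.re ^ 2 / 2) ≤ 1 := Real.exp_le_one_iff.2 (by nlinarith [sq_nonneg u.re])
  have hK : 0 ≤ |b| * ∫ r in (0 : ℝ)..1, Real.exp ((|b| * r) ^ 2 / 2) :=
    mul_nonneg (abs_nonneg b)
      (intervalIntegral.integral_nonneg zero_le_one fun _ _ => (Real.exp_pos _).le)
  calc ‖Fkern z w‖
      ≤ Real.exp (-‖z - w‖ ^ 2 / 2) * (1 + (√(2 * π))⁻¹ * 1 *
          (|b| * ∫ r in (0 : ℝ)..1, Real.exp ((|b| * r) ^ 2 / 2))) := by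
        rw [norm_Fkern]
        gcongr
        refine (norm_PhiC_le u).trans ?_
        rw [hu]
        gcongr
    _ = Real.exp (-‖z - w‖ ^ 2 / 2) +
          Real.exp (-a ^ 2 / 2) * ((√(2 * π))⁻¹ * √2) * dawson (|b| / √2) := by
        rw [hD]
        linear_combination -(Real.exp (-a ^ 2 / 2) * (√(2 * π))⁻¹) * sqrt_two_mul_dawson b
    _ = _ := by rw [hc]

lemma mul_exp_neg_sq_div_two_le_one (u : ℝ) : u * Real.exp (-u ^ 2 / 2) ≤ 1 := by
  have hu : u ≤ Real.exp (u ^ 2 / 2) := by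
    nlinarith [Real.add_one_le_exp (u ^ 2 / 2), sq_nonneg (u - 1)]
  calc u * Real.exp (-u ^ 2 / 2) ≤ Real.exp (u ^ 2 / 2) * Real.exp (-u ^ 2 / 2) := by gcongr
    _ = 1 := by rw [← Real.exp_add]; ring_nf; exact Real.exp_zero

lemma dawson_nonneg {t : ℝ} (ht : 0 ≤ t) : 0 ≤ dawson t :=
  mul_nonneg (Real.exp_pos _).le
    (intervalIntegral.integral_nonneg ht fun _ _ => (Real.exp_pos _).le)

lemma dawson_le_self {t : ℝ} (ht : 0 ≤ t) : dawson t ≤ t := by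
  have h : ∫ x in (0 : ℝ)..t, Real.exp (x ^ 2) ≤ ∫ _ in (0 : ℝ)..t, Real.exp (t ^ 2) :=
    intervalIntegral.integral_mono_on ht (Continuous.intervalIntegrable (by fun_prop) _ _)
      intervalIntegrable_const fun x hx => Real.exp_le_exp.2 (by nlinarith [hx.1, hx.2])
  rw [intervalIntegral.integral_const, smul_eq_mul, sub_zero] at h
  calc dawson t ≤ Real.exp (-t ^ 2) * (t * Real.exp (t ^ 2)) := by unfold dawson; gcongr
    _ = t := by rw [mul_left_comm, ← Real.exp_add]; simp

/-- `e^{x²} ≤ e^{tx}` on `[0, t]`, and the latter integrates to `(e^{t²} - 1)/t`. -/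
lemma mul_dawson_le_one {t : ℝ} (ht : 0 ≤ t) : t * dawson t ≤ 1 := by
  have h : t * ∫ x in (0 : ℝ)..t, Real.exp (x ^ 2) ≤ t * ∫ x in (0 : ℝ)..t, Real.exp (t * x) := by
    gcongr
    exact intervalIntegral.integral_mono_on ht (Continuous.intervalIntegrable (by fun_prop) _ _)
      (Continuous.intervalIntegrable (by fun_prop) _ _)
      fun x hx => Real.exp_le_exp.2 (by nlinarith [hx.1, hx.2])
  rw [intervalIntegral.mul_integral_comp_mul_left (f := Real.exp), integral_exp, mul_zero,
    Real.exp_zero, ← sq] at h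
  calc t * dawson t = Real.exp (-t ^ 2) * (t * ∫ x in (0 : ℝ)..t, Real.exp (x ^ 2)) := by
        unfold dawson; ring
    _ ≤ Real.exp (-t ^ 2) * (Real.exp (t ^ 2) - 1) := by gcongr
    _ ≤ 1 := by
        rw [mul_sub, ← Real.exp_add, neg_add_cancel, Real.exp_zero, mul_one]
        linarith [Real.exp_pos (-t ^ 2)]

lemma dawson_le_one {t : ℝ} (ht : 0 ≤ t) : dawson t ≤ 1 := by
  have h := dawson_nonneg ht
  nlinarith [dawson_le_self ht, mul_dawson_le_one ht]

lemma norm_sub_mul_norm_Fkern_le (z w : ℂ) : ‖z - w‖ * ‖Fkern z w‖ ≤ 4 := by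
  set a := (z - w).re
  set b := (z - w).im
  set t := |b| / √2
  have ht : 0 ≤ t := by positivity
  have hF0 : 0 ≤ dawson t := dawson_nonneg ht
  have hF1 : dawson t ≤ 1 := dawson_le_one ht
  have he1 : Real.exp (-a ^ 2 / 2) ≤ 1 := Real.exp_le_one_iff.2 (by nlinarith [sq_nonneg a])
  have ha : |a| * Real.exp (-a ^ 2 / 2) ≤ 1 := by
    simpa only [sq_abs] using mul_exp_neg_sq_div_two_le_one |a|
  have hb : |b| * dawson t ≤ 2 :=
    calc |b| * dawson t = √2 * (t * dawson t) := by simp only [t]; field_simp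
      _ ≤ 2 * 1 := by
          gcongr
          exacts [(Real.sqrt_le_left zero_le_two).2 (by norm_num), mul_dawson_le_one ht]
      _ = 2 := mul_one 2
  have hpi : (√π)⁻¹ ≤ 1 :=
    inv_le_one_of_one_le₀ (Real.one_le_sqrt.2 (by linarith [Real.pi_gt_three]))
  calc ‖z - w‖ * ‖Fkern z w‖
      ≤ ‖z - w‖ * (Real.exp (-‖z - w‖ ^ 2 / 2) + Real.exp (-a ^ 2 / 2) * 1 * dawson t) := by
        gcongr
        exact (norm_Fkern_le z w).trans (by gcongr)
    _ ≤ 1 + (|a| + |b|) * (Real.exp (-a ^ 2 / 2) * dawson t) := by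
        rw [mul_add, mul_one]
        gcongr
        exacts [mul_exp_neg_sq_div_two_le_one _, Complex.norm_le_abs_re_add_abs_im _]
    _ = 1 + ((|a| * Real.exp (-a ^ 2 / 2)) * dawson t + (|b| * dawson t) * Real.exp (-a ^ 2 / 2))
        := by ring
    _ ≤ 1 + (1 * 1 + 2 * 1) := by gcongr
    _ = 4 := by norm_num

/-- Estimates for the boundary kernel `𝐅`:
`|𝐅(z,w)| ≤ e^{−|z−w|²/2} + e^{−(Re(z−w))²/2} π^{−1/2} F(|Im(z−w)|/√2)` with `F` the
Dawson function; moreover `|z−w||𝐅(z,w)|` is uniformly bounded, and in particular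
`𝐅(z,w) → 0` as `|z−w| → ∞`. -/
theorem Fkern_estimates :
    (∀ z w : ℂ, ‖Fkern z w‖ ≤
      Real.exp (-‖z - w‖ ^ 2 / 2) +
        Real.exp (-(z - w).re ^ 2 / 2) * (Real.sqrt Real.pi)⁻¹ *
          dawson (|(z - w).im| / Real.sqrt 2)) ∧
    (∃ C : ℝ, ∀ z w : ℂ, ‖z - w‖ * ‖Fkern z w‖ ≤ C) ∧
    Tendsto (fun p : ℂ × ℂ => ‖Fkern p.1 p.2‖)
      (comap (fun p : ℂ × ℂ => ‖p.1 - p.2‖) atTop) (nhds 0) := by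
  refine ⟨norm_Fkern_le, ⟨4, norm_sub_mul_norm_Fkern_le⟩, ?_⟩
  have hD : Tendsto (fun p : ℂ × ℂ => ‖p.1 - p.2‖) (comap (fun p : ℂ × ℂ => ‖p.1 - p.2‖) atTop)
      atTop := tendsto_comap
  refine squeeze_zero' (Eventually.of_forall fun p => norm_nonneg _) ?_
    ((tendsto_const_nhds (x := (4 : ℝ))).div_atTop hD)
  filter_upwards [hD.eventually_gt_atTop 0] with p hp
  rw [le_div_iff₀ hp, mul_comm]
  exact norm_sub_mul_norm_Fkern_le p.1 p.2
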